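/- arXiv:2006.10508 — 2 statements merged into one kernel-verified Lean document; each statement's English description precedes it below -/
import Mathlib

section
/- Let F be a finite Veltman frame and i a natural number. Then F validates the schema A▷B → (A∧□C ▷ B∧□C) for all A ∈ ES₂ⁱ and all formulas B, C if and only if F satisfies the condition C_i: for all a,b with aRb there exists u such that bS_au, bis_i(b,u), and for all d,e, if uS_ad and dRe then bRe. -/
inductive Form : Type where
  | var : ℕ → Form
  | bot : Form
  | and : Form → Form → Form
  | imp : Form → Form → Form
  | box : Form → Form
  | rhd : Form → Form → Form

namespace Form

def neg (A : Form) : Form := A.imp .bot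
def or (A B : Form) : Form := (A.neg).imp B
def dia (A : Form) : Form := (A.neg.box).neg
def iff (A B : Form) : Form := (A.imp B).and (B.imp A)

end Form

/-- A boolean valuation respecting the propositional connectives
(modal formulas are treated as atoms). -/
def BoolEval (v : Form → Bool) : Prop :=
  v Form.bot = false ∧
  (∀ A B, v (Form.and A B) = (v A && v B)) ∧
  (∀ A B, v (Form.imp A B) = (!(v A) || v B))

/-- Propositional tautologies. -/
def Taut (A : Form) : Prop := ∀ v, BoolEval v → v A = true

/-- The interpretability logic IL extended with an extra axiom schema `Ax`. -/
inductive ILExt (Ax : Form → Prop) : Form → Prop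
  | ax {A : Form} : Ax A → ILExt Ax A
  | taut {A : Form} : Taut A → ILExt Ax A
  | L1 {A B : Form} : ILExt Ax (((A.imp B).box).imp ((A.box).imp (B.box)))
  | L2 {A : Form} : ILExt Ax ((A.box).imp (A.box.box))
  | L3 {A : Form} : ILExt Ax ((((A.box).imp A).box).imp (A.box))
  | J1 {A B : Form} : ILExt Ax (((A.imp B).box).imp (A.rhd B))
  | J2 {A B C : Form} : ILExt Ax (((A.rhd B).and (B.rhd C)).imp (A.rhd C))
  | J3 {A B C : Form} : ILExt Ax (((A.rhd C).and (B.rhd C)).imp ((A.or B).rhd C))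
  | J4 {A B : Form} : ILExt Ax ((A.rhd B).imp ((A.dia).imp (B.dia)))
  | J5 {A : Form} : ILExt Ax ((A.dia).rhd A)
  | mp {A B : Form} : ILExt Ax (A.imp B) → ILExt Ax A → ILExt Ax B
  | nec {A : Form} : ILExt Ax A → ILExt Ax (A.box)

/-- The basic interpretability logic IL. -/
def IL : Form → Prop := ILExt (fun _ => False)

/-- Boolean combinations of boxed formulas. -/
inductive BS1 : Form → Prop
  | box {A : Form} : BS1 (Form.box A)
  | neg {A : Form} : BS1 A → BS1 (Form.neg A)
  | and {A B : Form} : BS1 A → BS1 B → BS1 (A.and B)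
  | or {A B : Form} : BS1 A → BS1 B → BS1 (A.or B)

/-- Essentially Σ₂ formulas. -/
inductive ES2 : Form → Prop
  | box {A : Form} : ES2 (Form.box A)
  | nbox {A : Form} : ES2 (Form.neg (Form.box A))
  | and {A B : Form} : ES2 A → ES2 B → ES2 (A.and B)
  | or {A B : Form} : ES2 A → ES2 B → ES2 (A.or B)
  | nrhd {A B : Form} : ES2 A → ES2 (Form.neg (A.rhd B))

/-- One step of the stratification of ES₂. -/
inductive ES2succ (P : Form → Prop) : Form → Prop
  | base {A : Form} : P A → ES2succ P A
  | and {A B : Form} : ES2succ P A → ES2succ P B → ES2succ P (A.and B)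
  | or {A B : Form} : ES2succ P A → ES2succ P B → ES2succ P (A.or B)
  | nrhd {A B : Form} : P A → ES2succ P (Form.neg (A.rhd B))

/-- The stages ES₂ⁿ: ES₂⁰ = BS₁; ES₂ⁿ⁺¹ closes ES₂ⁿ under ∧, ∨ and ¬(·▷·). -/
def ES2n : ℕ → Form → Prop
  | 0 => BS1
  | n+1 => ES2succ (ES2n n)

/-- Disjunctions of boxed formulas. -/
inductive DisjBox : Form → Prop
  | box {A : Form} : DisjBox (Form.box A)
  | or {A B : Form} : DisjBox A → DisjBox B → DisjBox (A.or B)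

/-- Conjunctions of disjunctions of boxed formulas. -/
inductive CNFBox : Form → Prop
  | base {A : Form} : DisjBox A → CNFBox A
  | and {A B : Form} : CNFBox A → CNFBox B → CNFBox (A.and B)

/-- Veltman frames. -/
structure VFrame where
  W : Type
  nonempty : Nonempty W
  R : W → W → Prop
  S : W → W → W → Prop
  R_trans : Transitive R
  R_cwf : WellFounded (fun x y => R y x)
  S_dom : ∀ x y z, S x y z → R x y ∧ R x z
  S_refl : ∀ x y, R x y → S x y y
  R_S : ∀ x y z, R x y → R y z → S x y z
  S_trans : ∀ x u v w, S x u v → S x v w → S x u w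

/-- Veltman forcing. -/
def force (F : VFrame) (V : F.W → ℕ → Prop) : F.W → Form → Prop
  | w, .var n => V w n
  | _, .bot => False
  | w, .and A B => force F V w A ∧ force F V w B
  | w, .imp A B => force F V w A → force F V w B
  | w, .box A => ∀ v, F.R w v → force F V v A
  | w, .rhd A B => ∀ u, F.R w u → force F V u A → ∃ v, F.S w u v ∧ force F V v B

/-- Validity in a frame. -/
def valid (F : VFrame) (A : Form) : Prop := ∀ V w, force F V w A

/-- The simulation relations bisₙ. -/
def bis (F : VFrame) : ℕ → F.W → F.W → Prop
  | 0 => fun b u => ∀ y, F.R b y ↔ F.R u y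
  | n+1 => fun b u => bis F n b u ∧
      ∀ c, F.R b c → ∃ c', F.R u c' ∧ bis F n c c' ∧ ∀ z, F.S u c' z → F.S b c z

/-- B-simulations. -/
def BSim (F : VFrame) (bs : F.W → F.W → Prop) : Prop :=
  (∀ x x', bs x x' → ∀ y, F.R x y ↔ F.R x' y) ∧
  (∀ x x' y, bs x x' → F.R x y →
      ∃ y', F.S x y y' ∧ bs y y' ∧ ∀ z, F.S x' y' z → F.S x y z)

/-- The depth of a point: the length of the longest R-chain starting at it. -/
noncomputable def depth (F : VFrame) (x : F.W) : ℕ :=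
  sSup {n | ∃ f : Fin (n+1) → F.W, f 0 = x ∧
    ∀ i : Fin n, F.R (f i.castSucc) (f i.succ)}

/-! Soundness: if `u` witnesses Cᵢ for `w R x` and `x ⊩ A ∧ □C` with `A ∈ ES₂ⁱ`, then `A`
transfers from `x` to `u` along `bisᵢ`, `A ▷ B` at `w` yields an `S_w`-successor `v` of `u`
forcing `B`, and the condition on `u` carries `□C` from `x` to `v`.

Completeness: on a finite frame give every world its own atom. Then each `bisᵢ`-class is defined
by an ES₂ⁱ formula, the conjuncts `¬(· ▷ ·)` expressing the back-and-forth clause of `bisᵢ₊₁`, and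
the instance of the schema with that formula as `A`, `C` naming `b↑` and `B` saying "`Cᵢ` holds
here, or `□C` fails" produces the witness. -/

namespace Form

def listOr : List Form → Form
  | [] => bot
  | A :: L => A.or (listOr L)

def top : Form := box (neg bot)

def listAnd : List Form → Form
  | [] => top
  | A :: L => A.and (listAnd L)

noncomputable def finOr {α : Type*} (s : Finset α) (f : α → Form) : Form :=
  listOr (s.toList.map f)

noncomputable def finAnd {α : Type*} (s : Finset α) (f : α → Form) : Form :=
  listAnd (s.toList.map f)

lemma finAnd_of_closed {α : Type*} {Q : Form → Prop} (htop : Q top)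
    (hand : ∀ A B, Q A → Q B → Q (A.and B)) {s : Finset α} {f : α → Form}
    (hf : ∀ w ∈ s, Q (f w)) : Q (finAnd s f) := by
  suffices ∀ L : List Form, (∀ A ∈ L, Q A) → Q (listAnd L) from
    this _ (by simpa [Finset.mem_toList] using hf)
  intro L hL
  induction L with
  | nil => exact htop
  | cons A L ih => exact hand _ _ (hL A (by simp)) (ih fun B hB => hL B (by simp [hB]))

end Form

open Form

section Forcing

variable {F : VFrame} {V : F.W → ℕ → Prop} {x : F.W}

lemma force_neg {A : Form} : force F V x A.neg ↔ ¬ force F V x A := Iff.rfl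

lemma force_or {A B : Form} : force F V x (A.or B) ↔ force F V x A ∨ force F V x B := by
  simp only [Form.or, Form.neg, force]
  tauto

lemma force_dia {A : Form} : force F V x A.dia ↔ ∃ y, F.R x y ∧ force F V y A := by
  simp [Form.dia, Form.neg, force]

lemma force_finOr {α : Type*} {s : Finset α} {f : α → Form} :
    force F V x (finOr s f) ↔ ∃ w ∈ s, force F V x (f w) := by
  suffices ∀ L : List Form, force F V x (listOr L) ↔ ∃ A ∈ L, force F V x A by
    simp [finOr, this]
  intro L
  induction L with
  | nil => simp [listOr, force]
  | cons A L ih => simp [listOr, force_or, ih]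

lemma force_finAnd {α : Type*} {s : Finset α} {f : α → Form} :
    force F V x (finAnd s f) ↔ ∀ w ∈ s, force F V x (f w) := by
  suffices ∀ L : List Form, force F V x (listAnd L) ↔ ∀ A ∈ L, force F V x A by
    simp [finAnd, this]
  intro L
  induction L with
  | nil => simp [listAnd, Form.top, Form.neg, force]
  | cons A L ih => simp [listAnd, force, ih]

end Forcing

lemma ES2n_of_BS1 {A : Form} (h : BS1 A) : ∀ i, ES2n i A
  | 0 => h
  | i + 1 => ES2succ.base (ES2n_of_BS1 h i)

lemma bis_refl (F : VFrame) : ∀ i b, bis F i b b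
  | 0, _ => fun _ => Iff.rfl
  | i + 1, b => ⟨bis_refl F i b, fun c hc => ⟨c, hc, bis_refl F i c, fun _ hz => hz⟩⟩

lemma BS1.force_iff_of_bis_zero {F : VFrame} {A : Form} (hA : BS1 A) {b u : F.W}
    (hbu : bis F 0 b u) (V : F.W → ℕ → Prop) : force F V b A ↔ force F V u A := by
  induction hA with
  | box => exact forall_congr' fun y => imp_congr_left (hbu y)
  | neg _ ih => exact not_congr ih
  | and _ _ ih₁ ih₂ => exact and_congr ih₁ ih₂
  | or _ _ ih₁ ih₂ => simp only [force_or, ih₁, ih₂]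

lemma force_of_bis {F : VFrame} (V : F.W → ℕ → Prop) :
    ∀ {i A}, ES2n i A → ∀ {b u}, bis F i b u → force F V b A → force F V u A
  | 0, _, hA, _, _, hbu => (hA.force_iff_of_bis_zero hbu V).mp
  | n + 1, _, hA, _, _, hbu => by
    induction hA with
    | base hA => exact force_of_bis V hA hbu.1
    | and _ _ ih₁ ih₂ => exact fun h => ⟨ih₁ h.1, ih₂ h.2⟩
    | or _ _ ih₁ ih₂ => simpa only [force_or] using Or.imp ih₁ ih₂
    | nrhd hA =>
      refine fun hb hu => hb fun c hbc hc => ?_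
      obtain ⟨c', huc', hcc', hS⟩ := hbu.2 c hbc
      obtain ⟨z, hz, hzB⟩ := hu c' huc' (force_of_bis V hA hcc' hc)
      exact ⟨z, hS z hz, hzB⟩

noncomputable section CharacteristicFormulas

open Classical Finset

variable {F : VFrame} (enc : F.W → ℕ)

def pointVal : F.W → ℕ → Prop := fun x n => enc x = n

variable {enc} in
lemma force_var_pointVal (henc : Function.Injective enc) {x w : F.W} :
    force F (pointVal enc) x (var (enc w)) ↔ x = w :=
  henc.eq_iff

variable [Fintype F.W]

def charForm (P : F.W → Prop) : Form := finOr (univ.filter P) fun w => var (enc w)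

def bisForm : ℕ → F.W → Form
  | 0, b => (charForm enc (F.R b)).box.and <|
      finAnd (univ.filter (F.R b)) fun e => (var (enc e)).dia
  | i + 1, b => (bisForm i b).and <| finAnd (univ.filter (F.R b)) fun c =>
      ((bisForm i c).rhd (charForm enc fun z => ¬ F.S b c z)).neg

lemma bisForm_mem_ES2n : ∀ i b, ES2n i (bisForm enc i b)
  | 0, _ => BS1.and BS1.box <| finAnd_of_closed BS1.box (fun _ _ => BS1.and)
      fun _ _ => BS1.neg BS1.box
  | i + 1, b => ES2succ.and (ES2succ.base (bisForm_mem_ES2n i b)) <|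
      finAnd_of_closed (ES2succ.base (ES2n_of_BS1 BS1.box i)) (fun _ _ => ES2succ.and)
        fun c _ => ES2succ.nrhd (bisForm_mem_ES2n i c)

variable {enc}

lemma force_charForm (henc : Function.Injective enc) {P : F.W → Prop} {x : F.W} :
    force F (pointVal enc) x (charForm enc P) ↔ P x := by
  simp [charForm, force_finOr, force_var_pointVal henc]

lemma force_bisForm (henc : Function.Injective enc) :
    ∀ i b x, force F (pointVal enc) x (bisForm enc i b) ↔ bis F i b x
  | 0, b, x => by
    simp only [bisForm, force_dia, force, pointVal, henc.eq_iff, force_charForm henc,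
      force_finAnd, mem_filter, mem_univ, true_and, exists_eq_right, bis]
    exact ⟨fun h y => ⟨h.2 y, h.1 y⟩, fun h => ⟨fun y => (h y).2, fun y => (h y).1⟩⟩
  | i + 1, b, x => by
    simp only [bisForm, force, force_neg, force_finAnd, force_charForm henc,
      force_bisForm henc i, mem_filter, mem_univ, true_and, bis]
    push Not
    rfl

end CharacteristicFormulas

lemma exists_force_B_of_bis {F : VFrame} {V : F.W → ℕ → Prop} {i : ℕ} {A B C : Form}
    (hA : ES2n i A) {w x u : F.W} (hxu : F.S w x u) (hbis : bis F i x u)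
    (hcond : ∀ d e, F.S w u d → F.R d e → F.R x e) (hAB : force F V w (A.rhd B))
    (hx : force F V x (A.and C.box)) : ∃ v, F.S w x v ∧ force F V v (B.and C.box) := by
  obtain ⟨v, huv, hvB⟩ := hAB u (F.S_dom w x u hxu).2 (force_of_bis V hA hbis hx.1)
  exact ⟨v, F.S_trans w x u v hxu huv, hvB, fun e hve => hx.2 e (hcond v e huv hve)⟩

lemma exists_condC_of_valid_B {F : VFrame} [Fintype F.W] {enc : F.W → ℕ}
    (henc : Function.Injective enc) {i : ℕ} {a b : F.W} (hab : F.R a b)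
    (H : ∀ B C : Form, valid F (((bisForm enc i b).rhd B).imp
      (((bisForm enc i b).and C.box).rhd (B.and C.box)))) :
    ∃ u, F.S a b u ∧ bis F i b u ∧ ∀ d e, F.S a u d → F.R d e → F.R b e := by
  set C := charForm enc (F.R b)
  set Good := fun u => bis F i b u ∧ ∀ d e, F.S a u d → F.R d e → F.R b e
  have hAB :
      force F (pointVal enc) a ((bisForm enc i b).rhd ((charForm enc Good).or C.box.neg)) := by
    intro x hax hx
    by_cases hgood : ∀ d e, F.S a x d → F.R d e → F.R b e
    · exact ⟨x, F.S_refl a x hax, force_or.2 <| .inl <|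
        (force_charForm henc).2 ⟨(force_bisForm henc i b x).1 hx, hgood⟩⟩
    · push Not at hgood
      obtain ⟨d, e, hxd, hde, hbe⟩ := hgood
      exact ⟨d, hxd, force_or.2 <| .inr fun hd => hbe <| (force_charForm henc).1 (hd e hde)⟩
  have hb : force F (pointVal enc) b ((bisForm enc i b).and C.box) :=
    ⟨(force_bisForm henc i b b).2 (bis_refl F i b), fun e hbe => (force_charForm henc).2 hbe⟩
  obtain ⟨v, hbv, hvB, hvC⟩ := H _ C (pointVal enc) a hAB b hab hb
  rcases force_or.1 hvB with hv | hv
  · exact ⟨v, hbv, (force_charForm henc).1 hv⟩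
  · exact absurd hvC hv

/-- frame condition C_i for the principle B restricted to ES₂ⁱ. -/
theorem frame_condition_Bi (F : VFrame) [Finite F.W] (i : ℕ) :
    (∀ A B C : Form, ES2n i A →
        valid F ((A.rhd B).imp ((A.and (Form.box C)).rhd (B.and (Form.box C)))))
      ↔
    (∀ a b : F.W, F.R a b → ∃ u, F.S a b u ∧ bis F i b u ∧
        ∀ d e, F.S a u d → F.R d e → F.R b e) := by
  constructor
  · intro H a b hab
    have := Fintype.ofFinite F.W
    obtain ⟨enc, henc⟩ := exists_injective_nat F.W
    exact exists_condC_of_valid_B henc hab fun B C => H _ B C (bisForm_mem_ES2n enc i b)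
  · intro H A B C hA V w hAB x hwx hx
    obtain ⟨u, hxu, hbis, hcond⟩ := H w x hwx
    exact exists_force_B_of_bis hA hxu hbis hcond hAB hx
end

section
/- The logic IL extended with the principle B₀ (Montagna's principle restricted to BS₁-formulas: A▷B → (A∧□C ▷ B∧□C) for A ∈ BS₁) derives Zambella's principle Z: ((A▷B) ∧ (B▷A)) → (A ▷ A∧B) for A, B ∈ BS₁. -/
/-- The axiom schema B₀: Montagna's principle restricted to BS₁ formulas. -/
def B0Ax : Form → Prop := fun X =>
  ∃ A B C : Form, BS1 A ∧
    X = (A.rhd B).imp ((A.and (Form.box C)).rhd (B.and (Form.box C)))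

/-!
Let `L` collect the `D` with `□D` occurring in `A` or `B`; a pattern `T ⊆ L` fixes which
of these boxes are true. Under `H = A ▷ B ∧ B ▷ A` we show `X ∧ (pattern T) ▷ A ∧ B` for
`X ∈ {A, B}` by downward induction on `T`; as `A` is the disjunction of the
`A ∧ (pattern T)`, this gives Z. Let `Y` be the other formula. If the pattern makes `Y`
true, then `X ∧ (pattern T)` implies `A ∧ B` outright. Otherwise `B₀` turns `X ▷ Y` into
`X ∧ □⋀T ▷ Y ∧ □⋀T`; the boxes of `T` stay true under `□⋀T` while `Y` is false under `T`
itself, so `Y ∧ □⋀T` only admits strictly larger patterns, where the induction hypothesis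
applies with `X` and `Y` swapped.
-/

deriving instance DecidableEq for Form

namespace Form

def Entails (P Q : Form) : Prop := ∀ v, BoolEval v → v P = true → v Q = true

noncomputable def conjs (s : Finset Form) : Form := s.toList.foldr Form.and bot.neg

noncomputable def disjs (s : Finset Form) : Form := s.toList.foldr Form.or bot

def boxBodies : Form → Finset Form
  | .box D => {D}
  | .and A B | .imp A B => boxBodies A ∪ boxBodies B
  | _ => ∅

/-- The propositional type of a valuation of the boxes `□D`, `D ∈ L`: exactly those with
`D ∈ T` are true. -/
noncomputable def boxPattern (L T : Finset Form) : Form :=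
  conjs (L.image fun D => if D ∈ T then D.box else D.box.neg)

end Form

open Form

namespace BoolEval

variable {v : Form → Bool}

theorem bot_eq (hv : BoolEval v) : v bot = false := hv.1

theorem and_eq_true (hv : BoolEval v) {A B : Form} :
    v (A.and B) = true ↔ v A = true ∧ v B = true := by
  rw [hv.2.1, Bool.and_eq_true]

theorem imp_eq_true (hv : BoolEval v) {A B : Form} :
    v (A.imp B) = true ↔ (v A = true → v B = true) := by
  rw [hv.2.2]; cases v A <;> cases v B <;> simp

theorem neg_eq_true (hv : BoolEval v) {A : Form} : v A.neg = true ↔ v A = false := by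
  rw [Form.neg, hv.imp_eq_true, hv.bot_eq]; cases v A <;> simp

theorem or_eq_true (hv : BoolEval v) {A B : Form} :
    v (A.or B) = true ↔ v A = true ∨ v B = true := by
  rw [Form.or, hv.imp_eq_true, hv.neg_eq_true]; cases v A <;> simp

theorem conjs_eq_true (hv : BoolEval v) {s : Finset Form} :
    v (conjs s) = true ↔ ∀ x ∈ s, v x = true := by
  simp_rw [conjs, ← Finset.mem_toList]
  induction s.toList with
  | nil => simp [hv.neg_eq_true, hv.bot_eq]
  | cons x l ih => simp [hv.and_eq_true, ih]

theorem disjs_eq_true (hv : BoolEval v) {s : Finset Form} :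
    v (disjs s) = true ↔ ∃ x ∈ s, v x = true := by
  simp_rw [disjs, ← Finset.mem_toList]
  induction s.toList with
  | nil => simp [hv.bot_eq]
  | cons x l ih => simp [hv.or_eq_true, ih]

theorem boxPattern_eq_true (hv : BoolEval v) {L T : Finset Form} :
    v (boxPattern L T) = true ↔ ∀ D ∈ L, (v D.box = true ↔ D ∈ T) := by
  simp only [boxPattern, hv.conjs_eq_true, Finset.forall_mem_image]
  refine forall₂_congr fun D _ => ?_
  split_ifs with hD <;> simp [hv.neg_eq_true, hD]

end BoolEval

theorem BS1.eq_of_agree {X : Form} (hX : BS1 X) {v w : Form → Bool} (hv : BoolEval v)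
    (hw : BoolEval w) (h : ∀ D ∈ boxBodies X, v D.box = w D.box) : v X = w X := by
  induction hX with
  | box => exact h _ (by simp [boxBodies])
  | neg _ ih =>
    simp only [Form.neg, hv.2.2, hw.2.2, hv.bot_eq, hw.bot_eq]
    rw [ih fun D hD => h D (by simp [Form.neg, boxBodies, hD])]
  | and _ _ ihA ihB =>
    rw [hv.2.1, hw.2.1, ihA fun D hD => h D (by simp [boxBodies, hD]),
      ihB fun D hD => h D (by simp [boxBodies, hD])]
  | or _ _ ihA ihB =>
    simp only [Form.or, Form.neg, hv.2.2, hw.2.2, hv.bot_eq, hw.bot_eq]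
    rw [ihA fun D hD => h D (by simp [Form.or, Form.neg, boxBodies, hD]),
      ihB fun D hD => h D (by simp [Form.or, Form.neg, boxBodies, hD])]

theorem BS1.eq_of_boxPattern {X : Form} (hX : BS1 X) {L T : Finset Form}
    (hXL : boxBodies X ⊆ L) {v w : Form → Bool} (hv : BoolEval v) (hw : BoolEval w)
    (hvT : v (boxPattern L T) = true) (hwT : w (boxPattern L T) = true) : v X = w X := by
  refine hX.eq_of_agree hv hw fun D hD => ?_
  rw [hv.boxPattern_eq_true] at hvT
  rw [hw.boxPattern_eq_true] at hwT
  exact Bool.eq_iff_iff.2 ((hvT D (hXL hD)).trans (hwT D (hXL hD)).symm)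

theorem entails_disjs_boxPattern {X : Form} {L T : Finset Form} (hT : T ⊆ L) :
    Entails (X.and (conjs (T.image box)))
      (disjs ((L.powerset.filter (T ⊆ ·)).image fun T' => X.and (boxPattern L T'))) := by
  intro v hv h
  rw [hv.and_eq_true, hv.conjs_eq_true, Finset.forall_mem_image] at h
  rw [hv.disjs_eq_true]
  refine ⟨_, Finset.mem_image_of_mem _ (Finset.mem_filter.2
    ⟨Finset.mem_powerset.2 (Finset.filter_subset (fun D => v D.box = true) L),
      fun D hD => Finset.mem_filter.2 ⟨hT hD, h.2 hD⟩⟩), ?_⟩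
  simp +contextual [hv.and_eq_true, hv.boxPattern_eq_true, h.1]

theorem entails_boxPattern {L T : Finset Form} (hT : T ⊆ L) :
    Entails (boxPattern L T) (conjs (T.image box)) := by
  intro v hv h
  rw [hv.boxPattern_eq_true] at h
  rw [hv.conjs_eq_true, Finset.forall_mem_image]
  exact fun D hD => (h D (hT hD)).2 hD

namespace ILExt

variable {Ax : Form → Prop} {H P Q R Z : Form}

theorem imp_of_entails (h : Entails P Q) : ILExt Ax (P.imp Q) :=
  .taut fun v hv => hv.imp_eq_true.2 (h v hv)

theorem imp_of_derivable (h : ILExt Ax Q) : ILExt Ax (P.imp Q) := by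
  refine .mp (.taut fun v hv => ?_) h
  simp only [hv.imp_eq_true]
  tauto

theorem imp_trans (h₁ : ILExt Ax (P.imp Q)) (h₂ : ILExt Ax (Q.imp R)) : ILExt Ax (P.imp R) := by
  refine .mp (.mp (.taut fun v hv => ?_) h₁) h₂
  simp only [hv.imp_eq_true]
  tauto

theorem imp_and (h₁ : ILExt Ax (P.imp Q)) (h₂ : ILExt Ax (P.imp R)) :
    ILExt Ax (P.imp (Q.and R)) := by
  refine .mp (.mp (.taut fun v hv => ?_) h₁) h₂
  simp only [hv.imp_eq_true, hv.and_eq_true]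
  tauto

theorem box_mono (h : ILExt Ax (P.imp Q)) : ILExt Ax (P.box.imp Q.box) := .mp .L1 (.nec h)

theorem box_and : ILExt Ax ((P.box.and Q.box).imp (P.and Q).box) := by
  have h : ILExt Ax (P.box.imp (Q.box.imp (P.and Q).box)) :=
    imp_trans (box_mono (imp_of_entails fun v hv hP => by
      simp [hv.imp_eq_true, hv.and_eq_true, hP])) .L1
  refine .mp (.taut fun v hv => ?_) h
  simp only [hv.imp_eq_true, hv.and_eq_true]
  tauto

theorem imp_conjs {s : Finset Form} (h : ∀ x ∈ s, ILExt Ax (P.imp x)) :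
    ILExt Ax (P.imp (conjs s)) := by
  induction s using Finset.induction_on with
  | empty => exact imp_of_entails fun v hv _ => by simp [hv.conjs_eq_true]
  | insert a s _ ih =>
    refine imp_trans (imp_and (h a (by simp)) (ih fun x hx => h x (by simp [hx])))
      (imp_of_entails fun v hv hx => ?_)
    simp_all [hv.conjs_eq_true, hv.and_eq_true]

theorem conjs_image_box_imp_box_conjs {s : Finset Form} :
    ILExt Ax ((conjs (s.image box)).imp (conjs s).box) := by
  induction s using Finset.induction_on with
  | empty => exact imp_of_derivable (.nec (.taut fun v hv => by simp [hv.conjs_eq_true]))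
  | insert a s _ ih =>
    have head : ILExt Ax ((conjs ((insert a s).image box)).imp a.box) :=
      imp_of_entails fun v hv h => by simp_all [hv.conjs_eq_true]
    have tail : ILExt Ax ((conjs ((insert a s).image box)).imp (conjs (s.image box))) :=
      imp_of_entails fun v hv h => by simp_all [hv.conjs_eq_true]
    have join : ILExt Ax ((a.and (conjs s)).imp (conjs (insert a s))) :=
      imp_of_entails fun v hv h => by simp_all [hv.conjs_eq_true, hv.and_eq_true]
    exact imp_trans (imp_and head (imp_trans tail ih)) (imp_trans box_and (box_mono join))

theorem box_conjs_imp_conjs_image_box {s : Finset Form} :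
    ILExt Ax ((conjs s).box.imp (conjs (s.image box))) := by
  refine imp_conjs fun x hx => ?_
  obtain ⟨D, hD, rfl⟩ := Finset.mem_image.1 hx
  exact box_mono (imp_of_entails fun v hv h => hv.conjs_eq_true.1 h D hD)

theorem rhd_of_imp (h : ILExt Ax (P.imp Q)) : ILExt Ax (H.imp (P.rhd Q)) :=
  imp_of_derivable (.mp .J1 (.nec h))

theorem rhd_trans (h₁ : ILExt Ax (H.imp (P.rhd Q))) (h₂ : ILExt Ax (H.imp (Q.rhd R))) :
    ILExt Ax (H.imp (P.rhd R)) :=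
  imp_trans (imp_and h₁ h₂) .J2

theorem rhd_or (h₁ : ILExt Ax (H.imp (P.rhd Z))) (h₂ : ILExt Ax (H.imp (Q.rhd Z))) :
    ILExt Ax (H.imp ((P.or Q).rhd Z)) :=
  imp_trans (imp_and h₁ h₂) .J3

theorem rhd_disjs {s : Finset Form} (h : ∀ x ∈ s, ILExt Ax (H.imp (x.rhd Z))) :
    ILExt Ax (H.imp ((disjs s).rhd Z)) := by
  induction s using Finset.induction_on with
  | empty => exact rhd_of_imp (imp_of_entails fun v hv h => by simp [hv.disjs_eq_true] at h)
  | insert a s _ ih =>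
    refine rhd_trans (rhd_of_imp (Q := a.or (disjs s)) (imp_of_entails fun v hv h => ?_))
      (rhd_or (h a (by simp)) (ih fun x hx => h x (by simp [hx])))
    simp_all [hv.disjs_eq_true, hv.or_eq_true]

theorem rhd_of_entails_disjs {s : Finset Form} (hP : Entails P (disjs s))
    (h : ∀ x ∈ s, ILExt Ax (H.imp (x.rhd Z))) : ILExt Ax (H.imp (P.rhd Z)) :=
  rhd_trans (rhd_of_imp (imp_of_entails hP)) (rhd_disjs h)

theorem rhd_of_forall_boxPattern {X : Form} {L T : Finset Form} (hT : T ⊆ L)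
    (h : ∀ T' ⊆ L, T ⊆ T' → ILExt Ax (H.imp ((X.and (boxPattern L T')).rhd Z))) :
    ILExt Ax (H.imp ((X.and (conjs (T.image box))).rhd Z)) := by
  refine rhd_of_entails_disjs (entails_disjs_boxPattern hT) fun x hx => ?_
  obtain ⟨T', hT', rfl⟩ := Finset.mem_image.1 hx
  rw [Finset.mem_filter, Finset.mem_powerset] at hT'
  exact h T' hT'.1 hT'.2

end ILExt

open ILExt

theorem rhd_and_box_of_rhd {H X Y C : Form} (hX : BS1 X) (h : ILExt B0Ax (H.imp (X.rhd Y))) :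
    ILExt B0Ax (H.imp ((X.and C.box).rhd (Y.and C.box))) :=
  imp_trans h (.ax ⟨X, Y, C, hX, rfl⟩)

theorem rhd_boxPattern_of_rhd {H X Y Z : Form} {L T : Finset Form} (hX : BS1 X) (hY : BS1 Y)
    (hYL : boxBodies Y ⊆ L) (hT : T ⊆ L) (hXY : ILExt B0Ax (H.imp (X.rhd Y)))
    (hZ : Entails (X.and Y) Z)
    (ih : ∀ T' ⊆ L, T ⊂ T' → ILExt B0Ax (H.imp ((Y.and (boxPattern L T')).rhd Z))) :
    ILExt B0Ax (H.imp ((X.and (boxPattern L T)).rhd Z)) := by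
  by_cases hYT : ∀ v, BoolEval v → v (boxPattern L T) = true → v Y = true
  · exact rhd_of_imp (imp_of_entails fun v hv h => hZ v hv <| by
      rw [hv.and_eq_true] at h ⊢; exact ⟨h.1, hYT v hv h.2⟩)
  push Not at hYT
  obtain ⟨w, hw, hwT, hwY⟩ := hYT
  have to_box : ILExt B0Ax ((X.and (boxPattern L T)).imp (X.and (conjs T).box)) :=
    imp_and (imp_of_entails fun _ hv h => (hv.and_eq_true.1 h).1)
      (imp_trans (imp_of_entails fun v hv h =>
        entails_boxPattern hT v hv (hv.and_eq_true.1 h).2)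
        conjs_image_box_imp_box_conjs)
  have from_box : ILExt B0Ax ((Y.and (conjs T).box).imp (Y.and (conjs (T.image box)))) :=
    imp_and (imp_of_entails fun _ hv h => (hv.and_eq_true.1 h).1)
      (imp_trans (imp_of_entails fun _ hv h => (hv.and_eq_true.1 h).2)
        box_conjs_imp_conjs_image_box)
  refine rhd_trans (rhd_of_imp to_box) (rhd_trans (rhd_and_box_of_rhd hX hXY)
    (rhd_trans (rhd_of_imp from_box) (rhd_of_forall_boxPattern hT fun T' hT'L hTT' => ?_)))
  rcases hTT'.eq_or_ssubset with rfl | hTT'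
  · refine rhd_of_imp (imp_of_entails fun v hv h => ?_)
    rw [hv.and_eq_true] at h
    have := hY.eq_of_boxPattern hYL hv hw h.2 hwT
    simp_all
  · exact ih T' hT'L hTT'

theorem rhd_and_of_rhd_of_rhd {H A B : Form} (hA : BS1 A) (hB : BS1 B)
    (hAB : ILExt B0Ax (H.imp (A.rhd B))) (hBA : ILExt B0Ax (H.imp (B.rhd A))) :
    ILExt B0Ax (H.imp (A.rhd (A.and B))) := by
  set L := boxBodies A ∪ boxBodies B
  have hAL : boxBodies A ⊆ L := Finset.subset_union_left
  have hBL : boxBodies B ⊆ L := Finset.subset_union_right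
  have key : ∀ T, T.card ≤ L.card → T ⊆ L →
      ILExt B0Ax (H.imp ((A.and (boxPattern L T)).rhd (A.and B))) ∧
      ILExt B0Ax (H.imp ((B.and (boxPattern L T)).rhd (A.and B))) := by
    refine Finset.strongDownwardInduction fun T ih _ hT => ⟨?_, ?_⟩
    · refine rhd_boxPattern_of_rhd hA hB hBL hT hAB (fun _ _ h => h) fun T' hT'L hTT' => ?_
      exact (ih (Finset.card_le_card hT'L) hTT' hT'L).2
    · refine rhd_boxPattern_of_rhd hB hA hAL hT hBA (fun v hv h => ?_) fun T' hT'L hTT' => ?_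
      · rw [hv.and_eq_true] at h ⊢; exact h.symm
      · exact (ih (Finset.card_le_card hT'L) hTT' hT'L).1
  refine rhd_trans (rhd_of_imp (imp_of_entails fun v hv h => ?_))
    (rhd_of_forall_boxPattern (Finset.empty_subset L) fun T hT _ =>
      (key T (Finset.card_le_card hT) hT).1)
  simp [hv.and_eq_true, hv.conjs_eq_true, h]

/-- ILB₀ derives Zambella's principle Z. -/
theorem ILB0_derives_Z (A B : Form) (hA : BS1 A) (hB : BS1 B) :
    ILExt B0Ax (((A.rhd B).and (B.rhd A)).imp (A.rhd (A.and B))) :=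
  rhd_and_of_rhd_of_rhd hA hB (.imp_of_entails fun _ hv h => (hv.and_eq_true.1 h).1)
    (.imp_of_entails fun _ hv h => (hv.and_eq_true.1 h).2)
end
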